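/- Take ℚ̄ to be the field of algebraic numbers inside ℂ, and let L = ℚ^(2) be the compositum of all degree-≤2 extensions of ℚ inside ℚ̄. Then the real elements of L form exactly the field K = ℚ({√p : p prime}): L ∩ ℝ = K. -/

import Mathlib

/-!
After a rational translation, every element of a subfield of `ℂ` of degree at most 2 over `ℚ`
squares to a rational number, so it is `±√q` or `±i√q` for some `0 ≤ q ∈ ℚ`. Since `√q` is a
quotient of products of square roots of primes, all of these lie in `K(i) = K + K i`. As `K`
consists of real numbers, the real elements of `K + K i` are those of `K`. Conversely, each `√p`
generates a quadratic field and is real.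
-/

open scoped IntermediateField
open IntermediateField Polynomial

/-- `ℚ^(2)` realised inside `ℂ`: the compositum of all subfields of the algebraic numbers
of degree at most 2 over `ℚ` (any subfield of `ℂ` of degree at most 2 over `ℚ` consists of
algebraic numbers). -/
noncomputable def Qsqrt2C : IntermediateField ℚ ℂ :=
  ⨆ F ∈ {F : IntermediateField ℚ ℂ | Module.rank ℚ F ≤ 2}, F

/-- `K = ℚ({√p : p prime})` realised inside `ℂ`, generated by the positive real square
roots of the rational primes. -/
noncomputable def KsqrtC : IntermediateField ℚ ℂ :=
  IntermediateField.adjoin ℚ {x : ℂ | ∃ p : ℕ, p.Prime ∧ x = (Real.sqrt p : ℂ)}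

section
variable {F E : Type*} [Field F] [Field E] [Algebra F E]

theorem exists_eq_add_mul_of_mem_adjoin_of_sq_eq {j : E} {d : F}
    (hj : j ^ 2 = algebraMap F E d) {x : E} (hx : x ∈ F⟮j⟯) :
    ∃ a b : F, x = algebraMap F E a + algebraMap F E b * j := by
  have hint : IsIntegral F j := .of_pow two_pos (hj ▸ isIntegral_algebraMap)
  rw [← mem_toSubalgebra, adjoin_simple_toSubalgebra_of_isAlgebraic hint.isAlgebraic] at hx
  induction hx using Algebra.adjoin_induction with
  | mem x hx => exact ⟨0, 1, by simp_all⟩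
  | algebraMap a => exact ⟨a, 0, by simp⟩
  | add x y _ _ hx hy =>
    obtain ⟨a, b, rfl⟩ := hx
    obtain ⟨c, e, rfl⟩ := hy
    exact ⟨a + c, b + e, by simp only [map_add]; ring⟩
  | mul x y _ _ hx hy =>
    obtain ⟨a, b, rfl⟩ := hx
    obtain ⟨c, e, rfl⟩ := hy
    exact ⟨a * c + b * e * d, a * e + b * c, by simp only [map_add, map_mul, ← hj]; ring⟩

theorem rank_adjoin_le_two_of_sq_eq {j : E} {d : F} (hj : j ^ 2 = algebraMap F E d) :
    Module.rank F F⟮j⟯ ≤ 2 := by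
  have hmonic : (X ^ 2 - C d).Monic := monic_X_pow_sub_C d two_ne_zero
  have hroot : aeval j (X ^ 2 - C d) = 0 := by simp [hj]
  have hint : IsIntegral F j := ⟨_, hmonic, hroot⟩
  have := adjoin.finiteDimensional hint
  rw [← Module.finrank_eq_rank, adjoin.finrank hint]
  exact_mod_cast natDegree_X_pow_sub_C (n := 2) (r := d) ▸
    natDegree_le_natDegree (minpoly.degree_le_of_ne_zero F j hmonic.ne_zero hroot)

theorem exists_add_sq_eq_of_natDegree_minpoly_le_two [NeZero (2 : F)] {x : E}
    (hx : IsIntegral F x) (hdeg : (minpoly F x).natDegree ≤ 2) :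
    ∃ c d : F, (x + algebraMap F E c) ^ 2 = algebraMap F E d := by
  have hmonic := minpoly.monic hx
  interval_cases h : (minpoly F x).natDegree
  · exact absurd h (minpoly.natDegree_pos hx).ne'
  · obtain ⟨a, rfl⟩ := minpoly.natDegree_eq_one_iff.mp h
    exact ⟨-a, 0, by simp⟩
  · have hsum := aeval_eq_sum_range (p := minpoly F x) x
    rw [minpoly.aeval, h, Finset.sum_range_succ, Finset.sum_range_succ, Finset.sum_range_one,
      ← h, hmonic.coeff_natDegree, h] at hsum
    set b := (minpoly F x).coeff 1
    set c := (minpoly F x).coeff 0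
    refine ⟨b / 2, (b / 2) ^ 2 - c, ?_⟩
    simp only [Algebra.smul_def, map_one, one_mul, pow_zero, pow_one, mul_one] at hsum
    simp only [map_sub, map_pow, map_div₀, map_ofNat]
    have h2 : (2 : E) ≠ 0 := by
      rw [← map_ofNat (algebraMap F E) 2]
      exact (_root_.map_ne_zero _).mpr two_ne_zero
    field_simp
    linear_combination (-4) * hsum

theorem exists_add_sq_eq_of_rank_le_two [NeZero (2 : F)] (h : Module.rank F E ≤ 2) (x : E) :
    ∃ c d : F, (x + algebraMap F E c) ^ 2 = algebraMap F E d := by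
  have : FiniteDimensional F E :=
    Module.rank_lt_aleph0_iff.mp (h.trans_lt Cardinal.natCast_lt_aleph0)
  exact exists_add_sq_eq_of_natDegree_minpoly_le_two (.of_finite F x)
    ((minpoly.natDegree_le x).trans (Module.finrank_le_of_rank_le h))

end

theorem KsqrtC_le_restrictScalars_bot :
    KsqrtC ≤ (⊥ : IntermediateField ℝ ℂ).restrictScalars ℚ :=
  adjoin_le_iff.mpr <| by rintro _ ⟨p, -, rfl⟩; exact ⟨√p, rfl⟩

theorem im_eq_zero_of_mem_KsqrtC {x : ℂ} (hx : x ∈ KsqrtC) : x.im = 0 := by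
  obtain ⟨r, rfl⟩ := KsqrtC_le_restrictScalars_bot hx
  exact Complex.ofReal_im r

theorem ofReal_sqrt_natCast_mem_KsqrtC (n : ℕ) : (√n : ℂ) ∈ KsqrtC := by
  induction n using induction_on_primes with
  | zero => simp
  | one => simp
  | prime_mul p n hp ih =>
    rw [Nat.cast_mul, Real.sqrt_mul (Nat.cast_nonneg p), Complex.ofReal_mul]
    exact mul_mem (subset_adjoin _ _ ⟨p, hp, rfl⟩) ih

theorem ofReal_sqrt_ratCast_mem_KsqrtC {q : ℚ} (hq : 0 ≤ q) : (√q : ℂ) ∈ KsqrtC := by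
  have hq' : (q : ℝ) = (q.num.toNat * q.den : ℕ) / (q.den : ℝ) ^ 2 := by
    rw [Nat.cast_mul, ← Int.cast_natCast, Int.toNat_of_nonneg (Rat.num_nonneg.mpr hq),
      Rat.cast_def]
    field_simp
  rw [hq', Real.sqrt_div' _ (by positivity), Real.sqrt_sq (Nat.cast_nonneg _),
    Complex.ofReal_div]
  exact div_mem (ofReal_sqrt_natCast_mem_KsqrtC _) (_root_.natCast_mem KsqrtC _)

noncomputable def KsqrtCI : IntermediateField ℚ ℂ :=
  (KsqrtC⟮Complex.I⟯).restrictScalars ℚ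

theorem KsqrtC_le_KsqrtCI : KsqrtC ≤ KsqrtCI := fun x hx =>
  (mem_restrictScalars ℚ).mpr (IntermediateField.algebraMap_mem _ (⟨x, hx⟩ : KsqrtC))

theorem I_mem_KsqrtCI : Complex.I ∈ KsqrtCI :=
  (mem_restrictScalars ℚ).mpr (mem_adjoin_simple_self _ _)

theorem exists_mem_KsqrtCI_sq_eq_ratCast (q : ℚ) : ∃ t ∈ KsqrtCI, t ^ 2 = q := by
  rcases le_total 0 q with hq | hq
  · refine ⟨√q, KsqrtC_le_KsqrtCI (ofReal_sqrt_ratCast_mem_KsqrtC hq), ?_⟩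
    rw [← Complex.ofReal_pow, Real.sq_sqrt (Rat.cast_nonneg.mpr hq), Complex.ofReal_ratCast]
  · have hq' : 0 ≤ -q := neg_nonneg.mpr hq
    refine ⟨Complex.I * √(-q : ℚ),
      mul_mem I_mem_KsqrtCI (KsqrtC_le_KsqrtCI (ofReal_sqrt_ratCast_mem_KsqrtC hq')), ?_⟩
    rw [mul_pow, Complex.I_sq, ← Complex.ofReal_pow, Real.sq_sqrt (Rat.cast_nonneg.mpr hq')]
    push_cast
    ring

theorem mem_KsqrtCI_of_sq_eq_ratCast {s : ℂ} {q : ℚ} (hs : s ^ 2 = q) : s ∈ KsqrtCI := by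
  obtain ⟨t, ht, htq⟩ := exists_mem_KsqrtCI_sq_eq_ratCast q
  rcases sq_eq_sq_iff_eq_or_eq_neg.mp (hs.trans htq.symm) with rfl | rfl
  · exact ht
  · exact neg_mem ht

theorem Qsqrt2C_le_KsqrtCI : Qsqrt2C ≤ KsqrtCI := by
  refine iSup₂_le fun F (hF : Module.rank ℚ F ≤ 2) x hx => ?_
  obtain ⟨c, d, h⟩ := exists_add_sq_eq_of_rank_le_two hF ⟨x, hx⟩
  have h' : (x + c) ^ 2 = (d : ℂ) := by simpa using congrArg (algebraMap F ℂ) h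
  simpa using sub_mem (mem_KsqrtCI_of_sq_eq_ratCast h') (SubfieldClass.ratCast_mem KsqrtCI c)

theorem mem_KsqrtC_of_mem_KsqrtCI {x : ℂ} (hx : x ∈ KsqrtCI) (him : x.im = 0) :
    x ∈ KsqrtC := by
  obtain ⟨a, b, rfl⟩ :=
    exists_eq_add_mul_of_mem_adjoin_of_sq_eq (d := -1) (by simp) ((mem_restrictScalars ℚ).mp hx)
  have hb : (b : ℂ) = 0 := by
    refine Complex.ext ?_ (im_eq_zero_of_mem_KsqrtC b.2)
    simpa [im_eq_zero_of_mem_KsqrtC a.2] using him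
  simp [hb]

theorem le_Qsqrt2C {F : IntermediateField ℚ ℂ} (hF : Module.rank ℚ F ≤ 2) : F ≤ Qsqrt2C :=
  le_iSup₂_of_le F hF le_rfl

theorem KsqrtC_le_Qsqrt2C : KsqrtC ≤ Qsqrt2C := by
  refine adjoin_le_iff.mpr ?_
  rintro _ ⟨p, hp, rfl⟩
  have hsq : (√p : ℂ) ^ 2 = algebraMap ℚ ℂ p := by
    rw [← Complex.ofReal_pow, Real.sq_sqrt (Nat.cast_nonneg p)]; simp
  exact le_Qsqrt2C (rank_adjoin_le_two_of_sq_eq hsq) (mem_adjoin_simple_self ℚ (√p : ℂ))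

/-- The real elements of `L = ℚ^(2)` form exactly the field `K = ℚ({√p : p prime})`:
`L ∩ ℝ = K`. -/
theorem real_part_of_Qsqrt2 :
    ∀ x : ℂ, (x ∈ Qsqrt2C ∧ x.im = 0) ↔ x ∈ KsqrtC :=
  fun _ => ⟨fun ⟨hL, him⟩ => mem_KsqrtC_of_mem_KsqrtCI (Qsqrt2C_le_KsqrtCI hL) him,
    fun hK => ⟨KsqrtC_le_Qsqrt2C hK, im_eq_zero_of_mem_KsqrtC hK⟩⟩
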